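/- Let M ∈ ℂ^{m×m}, p ∈ ℕ with p ≥ 1, and t ≥ 0. Then the spectral operator norm of φ_p(tM) satisfies ‖φ_p(tM)‖₂ ≤ (max_{s∈[0,t]} ‖e^{sM}‖₂)/p!. -/

import Mathlib

open MeasureTheory

/-- `φ_p(M) = ∑_{k=0}^∞ M^k/(k+p)!` for a square complex matrix `M`;
`matPhi 0` is the matrix exponential. -/
noncomputable def matPhi {N : Type*} [Fintype N] [DecidableEq N] (p : ℕ) (M : Matrix N N ℂ) :
    Matrix N N ℂ :=
  ∑' k : ℕ, ((k + p).factorial : ℂ)⁻¹ • M ^ k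

/-- `φ_p(z) = ∑_{k=0}^∞ z^k/(k+p)!` for `z ∈ ℂ`. -/
noncomputable def phiC (p : ℕ) (z : ℂ) : ℂ :=
  ∑' k : ℕ, z ^ k / ((k + p).factorial : ℂ)

/-- The ordered simplex `{1 ≥ s 0 ≥ s 1 ≥ ⋯ ≥ s (k-1) ≥ 0}`, the domain of the
iterated integral `∫_0^1 ∫_0^{s_1} ⋯ ∫_0^{s_{k-2}} ⋯ ds_{k-1} ⋯ ds_1`. -/
def simplexSet (k : ℕ) : Set (Fin k → ℝ) :=
  {s | (∀ j, 0 ≤ s j ∧ s j ≤ 1) ∧ ∀ i j : Fin k, i ≤ j → s j ≤ s i}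

/-- Divided difference of `f` over the `k+1` nodes `x 0, …, x k`, via the
Hermite–Genocchi formula
`f[x_0,…,x_k] = ∫_{Δ_k} f^{(k)}(x_0 + ∑_j s_j (x_{j+1} − x_j)) ds`. -/
noncomputable def divDiff (f : ℂ → ℂ) {k : ℕ} (x : Fin (k + 1) → ℂ) : ℂ :=
  ∫ s in simplexSet k,
    iteratedDeriv k f (x 0 + ∑ j : Fin k, (s j : ℂ) * (x j.succ - x j.castSucc))

/-- Euclidean norm `‖x‖₂` of a complex vector. -/
noncomputable def vnorm {N : Type*} [Fintype N] (x : N → ℂ) : ℝ :=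
  Real.sqrt (∑ i, ‖x i‖ ^ 2)

/-- Spectral operator norm `‖A‖₂` (operator norm induced by the Euclidean norm). -/
noncomputable def mnorm {N M : Type*} [Fintype N] [Fintype M] (A : Matrix N M ℂ) : ℝ :=
  sSup {c : ℝ | ∃ x : M → ℂ, vnorm x ≤ 1 ∧ c = vnorm (A.mulVec x)}

/-- `A` is dissipative: `Re⟨A y, y⟩ ≤ 0` for all `y`. -/
def Dissipative {N : Type*} [Fintype N] (A : Matrix N N ℂ) : Prop :=
  ∀ y : N → ℂ, (dotProduct (star y) (A.mulVec y)).re ≤ 0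

/-!
For `p = n + 1`, integrating the exponential series termwise against the Beta integral
`∫₀¹ θ^k (1-θ)^n dθ = k! n! / (k+n+1)!` gives
`φ_p(x) = ∫₀¹ (1-θ)^n / n! • e^{θx} dθ`.
The kernel is nonnegative with total mass `1/p!`, and `θ t ∈ [0, t]` for `θ ∈ [0, 1]`.
-/

open NormedSpace (exp)
open scoped Nat

theorem integral_pow_mul_one_sub_pow (k n : ℕ) :
    ∫ θ in (0:ℝ)..1, θ ^ k * (1 - θ) ^ n = (k ! * n ! / (k + n + 1)! : ℝ) := by
  have hbeta := Complex.Gamma_mul_Gamma_eq_betaIntegral (s := k + 1) (t := n + 1)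
    (by rw [Complex.add_re, Complex.natCast_re, Complex.one_re]; positivity)
    (by rw [Complex.add_re, Complex.natCast_re, Complex.one_re]; positivity)
  have hk : k + 1 + (n + 1 : ℂ) = ↑(k + n + 1) + 1 := by push_cast; ring
  rw [hk, Complex.Gamma_nat_eq_factorial, Complex.Gamma_nat_eq_factorial,
    Complex.Gamma_nat_eq_factorial, Complex.betaIntegral] at hbeta
  have hint : (∫ x in (0:ℝ)..1, (x : ℂ) ^ ((k:ℂ) + 1 - 1) * (1 - (x : ℂ)) ^ ((n:ℂ) + 1 - 1)) =
      ((∫ θ in (0:ℝ)..1, θ ^ k * (1 - θ) ^ n : ℝ) : ℂ) := by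
    rw [← intervalIntegral.integral_ofReal]
    refine intervalIntegral.integral_congr fun x _ => ?_
    simp only [add_sub_cancel_right, Complex.cpow_natCast]
    push_cast; ring
  rw [hint] at hbeta
  have hne : ((k + n + 1)! : ℂ) ≠ 0 := mod_cast (k + n + 1).factorial_ne_zero
  apply Complex.ofReal_injective
  push_cast
  rw [eq_div_iff hne]
  linear_combination -hbeta

theorem integral_one_sub_pow_div_factorial_mul_pow (n k : ℕ) :
    ∫ θ in (0:ℝ)..1, (1 - θ) ^ n / n ! * θ ^ k = (k ! / (k + n + 1)! : ℝ) :=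
  calc ∫ θ in (0:ℝ)..1, (1 - θ) ^ n / n ! * θ ^ k
      = (∫ θ in (0:ℝ)..1, θ ^ k * (1 - θ) ^ n) / n ! := by
        rw [← intervalIntegral.integral_div]; congr 1; ext θ; ring
    _ = _ := by rw [integral_pow_mul_one_sub_pow]; field_simp

theorem one_sub_pow_div_factorial_mul_pow_mem_Icc {θ : ℝ} (h₀ : 0 ≤ θ) (h₁ : θ ≤ 1) (n k : ℕ) :
    (1 - θ) ^ n / n ! * θ ^ k ∈ Set.Icc (0:ℝ) 1 := by
  have h₁' : 0 ≤ 1 - θ := sub_nonneg.2 h₁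
  refine ⟨by positivity, mul_le_one₀ ?_ (pow_nonneg h₀ k) (pow_le_one₀ h₀ h₁)⟩
  exact div_le_one_of_le₀ ((pow_le_one₀ h₁' (by linarith)).trans
    (Nat.one_le_cast.mpr n.factorial_pos)) (by positivity)

section BanachAlgebra

variable {𝔸 : Type*} [NormedRing 𝔸] [NormedAlgebra ℂ 𝔸] [CompleteSpace 𝔸]

theorem hasSum_phi_integral_exp (n : ℕ) (x : 𝔸) :
    HasSum (fun k => ((k + (n + 1))! : ℂ)⁻¹ • x ^ k)
      (∫ θ in (0:ℝ)..1, ((1 - θ) ^ n / n ! : ℝ) • exp ((θ : ℂ) • x)) := by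
  set F : ℕ → ℝ → 𝔸 := fun k θ => ((1 - θ) ^ n / n ! * θ ^ k : ℝ) • ((k ! : ℂ)⁻¹ • x ^ k)
  have hF : ∀ k, ∫ θ in (0:ℝ)..1, F k θ = ((k + (n + 1))! : ℂ)⁻¹ • x ^ k := by
    intro k
    rw [intervalIntegral.integral_smul_const, integral_one_sub_pow_div_factorial_mul_pow,
      RCLike.real_smul_eq_coe_smul (K := ℂ), smul_smul, ← add_assoc]
    congr 1
    have : (k ! : ℂ) ≠ 0 := mod_cast k.factorial_ne_zero
    push_cast
    field_simp
  rw [← funext hF]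
  refine intervalIntegral.hasSum_integral_of_dominated_convergence
    (fun k _ => ‖(k ! : ℂ)⁻¹ • x ^ k‖)
    (fun k => (by fun_prop : Continuous (F k)).aestronglyMeasurable) ?_ ?_ ?_ ?_
  · refine fun k => Filter.Eventually.of_forall fun θ hθ => ?_
    rw [Set.uIoc_of_le zero_le_one] at hθ
    have hw := one_sub_pow_div_factorial_mul_pow_mem_Icc hθ.1.le hθ.2 n k
    rw [norm_smul, Real.norm_of_nonneg hw.1]
    exact mul_le_of_le_one_left (norm_nonneg _) hw.2
  · exact Filter.Eventually.of_forall fun _ _ => NormedSpace.norm_expSeries_summable' (𝕂 := ℂ) x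
  · exact intervalIntegrable_const
  · refine Filter.Eventually.of_forall fun θ _ => ?_
    have hterm : (fun k => F k θ) =
        fun k => ((1 - θ) ^ n / n ! : ℝ) • ((k ! : ℂ)⁻¹ • ((θ : ℂ) • x) ^ k) := by
      ext k
      simp only [F, smul_pow, RCLike.real_smul_eq_coe_smul (K := ℂ), smul_smul]
      congr 1
      simp only [RCLike.ofReal_eq_complex_ofReal]
      push_cast
      ring
    rw [hterm]
    exact (NormedSpace.exp_series_hasSum_exp' ((θ : ℂ) • x)).const_smul _

theorem norm_tsum_phi_le (n : ℕ) (x : 𝔸) {C : ℝ}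
    (hC : ∀ θ ∈ Set.Icc (0:ℝ) 1, ‖exp ((θ : ℂ) • x)‖ ≤ C) :
    ‖∑' k, ((k + (n + 1))! : ℂ)⁻¹ • x ^ k‖ ≤ C / (n + 1)! := by
  rw [(hasSum_phi_integral_exp n x).tsum_eq]
  calc _ ≤ ∫ θ in (0:ℝ)..1, (1 - θ) ^ n / n ! * C := by
        refine intervalIntegral.norm_integral_le_of_norm_le zero_le_one
          (Filter.Eventually.of_forall fun θ hθ => ?_)
          (Continuous.intervalIntegrable (by fun_prop) 0 1)
        have hθ' : 0 ≤ 1 - θ := sub_nonneg.2 hθ.2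
        rw [norm_smul, Real.norm_of_nonneg (by positivity)]
        exact mul_le_mul_of_nonneg_left (hC θ (Set.Ioc_subset_Icc_self hθ)) (by positivity)
    _ = C / (n + 1)! := by
        have hmass := integral_one_sub_pow_div_factorial_mul_pow n 0
        simp only [pow_zero, mul_one, Nat.factorial_zero, Nat.cast_one, zero_add] at hmass
        rw [intervalIntegral.integral_mul_const, hmass, one_div_mul_eq_div]

end BanachAlgebra

open scoped Matrix.Norms.L2Operator

theorem vnorm_eq_norm_toLp {N : Type*} [Fintype N] (x : N → ℂ) :
    vnorm x = ‖WithLp.toLp 2 x‖ := by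
  simp [vnorm, EuclideanSpace.norm_eq]

theorem mnorm_eq_l2_opNorm {m n : Type*} [Fintype m] [Fintype n] [DecidableEq n]
    (A : Matrix m n ℂ) : mnorm A = ‖A‖ := by
  rw [Matrix.l2_opNorm_def, ← ContinuousLinearMap.sSup_unitClosedBall_eq_norm, mnorm]
  congr 1
  ext c
  constructor
  · rintro ⟨x, hx, rfl⟩
    exact ⟨WithLp.toLp 2 x, by simpa [vnorm_eq_norm_toLp] using hx, by simp [vnorm_eq_norm_toLp]⟩
  · rintro ⟨y, hy, rfl⟩
    exact ⟨y.ofLp, by simpa [vnorm_eq_norm_toLp] using hy,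
      by rw [vnorm_eq_norm_toLp]; rfl⟩

theorem matPhi_zero_eq_exp {N : Type*} [Fintype N] [DecidableEq N] (A : Matrix N N ℂ) :
    matPhi 0 A = exp A := by
  simp [matPhi, NormedSpace.exp_eq_tsum ℂ]

/-- for `p ≥ 1` and `t ≥ 0`,
`‖φ_p(tM)‖₂ ≤ (max_{s∈[0,t]} ‖e^{sM}‖₂)/p!`. -/
theorem statement16 (d : ℕ) (M : Matrix (Fin d) (Fin d) ℂ) (p : ℕ) (hp : 1 ≤ p)
    (t : ℝ) (ht : 0 ≤ t) :
    mnorm (matPhi p (t • M)) ≤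
      sSup ((fun s : ℝ => mnorm (matPhi 0 (s • M))) '' Set.Icc 0 t) /
        (p.factorial : ℝ) := by
  obtain ⟨n, rfl⟩ := Nat.exists_eq_add_of_le' hp
  simp only [mnorm_eq_l2_opNorm, matPhi_zero_eq_exp]
  -- `NormedSpace.exp_continuous` would need a `NormedAlgebra ℚ` instance for the L2 norm.
  have hexp : Continuous (exp : Matrix (Fin d) (Fin d) ℂ → _) :=
    continuous_iff_continuousAt.2 fun x => (NormedSpace.exp_analytic (𝕂 := ℂ) x).continuousAt
  have hbdd : BddAbove ((fun s : ℝ => ‖exp (s • M)‖) '' Set.Icc 0 t) :=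
    isCompact_Icc.bddAbove_image (hexp.comp (continuous_id.smul continuous_const)).norm.continuousOn
  -- The L2 operator norm keeps the product topology, so `matPhi` is the series below verbatim.
  refine norm_tsum_phi_le n (t • M) fun θ hθ => le_csSup hbdd ⟨θ * t, ⟨?_, ?_⟩, ?_⟩
  · exact mul_nonneg hθ.1 ht
  · exact mul_le_of_le_one_left ht hθ.2
  · have hsmul : (θ : ℂ) • (t • M) = (θ * t) • M := by
      ext i j
      simp only [Matrix.smul_apply, Complex.real_smul, smul_eq_mul]
      push_cast
      ring
    rw [hsmul]
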